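/- Let G be a finite simple graph with edge ideal I(G) ⊆ R = k[x_1,...,x_n]. Then reg(R/I(G)) ≤ α'(G), where α'(G) is the matching number of G. Equivalently, reg(I(G)) ≤ α'(G) + 1. -/

import Mathlib

open Finset
open scoped Classical

noncomputable section

/-- A simple hypergraph: all edges have at least two vertices and no edge contains another. -/
structure SimpleHypergraph (V : Type*) where
  edges : Finset (Finset V)
  card_ge : ∀ e ∈ edges, 2 ≤ e.card
  antichain : ∀ e ∈ edges, ∀ f ∈ edges, e ⊆ f → e = f

variable {V : Type*} [DecidableEq V]

/-- A chain `(E₀, x₁, E₁, …, xₙ, Eₙ)` in a hypergraph, recorded as the list of its edges;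
the vertex conditions amount to `xₖ ∈ Eₖ₋₁ ∩ Eₖ`. -/
def IsHChain (H : SimpleHypergraph V) (l : List (Finset V)) : Prop :=
  l ≠ [] ∧ l.Nodup ∧ (∀ e ∈ l, e ∈ H.edges) ∧
  ∃ xs : List V, xs.Nodup ∧ xs.length + 1 = l.length ∧
    ∀ i, (h : i < xs.length) → xs.get ⟨i, h⟩ ∈ l.getD i ∅ ∩ l.getD (i+1) ∅

/-- A proper chain: `|Eᵢ ∩ Eᵢ₊₁| = |Eᵢ₊₁| - 1` for all `i`. -/
def IsProperChain (H : SimpleHypergraph V) (l : List (Finset V)) : Prop :=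
  IsHChain H l ∧ ∀ i, i + 1 < l.length →
    (l.getD i ∅ ∩ l.getD (i+1) ∅).card + 1 = (l.getD (i+1) ∅).card

/-- A proper irredundant chain: no proper subsequence with the same endpoints is a proper
chain. -/
def IsPIChain (H : SimpleHypergraph V) (l : List (Finset V)) : Prop :=
  IsProperChain H l ∧ ∀ l' : List (Finset V), l'.Sublist l → l' ≠ l →
    l'.head? = l.head? → l'.getLast? = l.getLast? → ¬ IsProperChain H l'

/-- The distance between two edges: minimal length of a proper irredundant chain
from `E` to `F` (`∞` if there is none). -/
def edgeDist (H : SimpleHypergraph V) (E F : Finset V) : ℕ∞ :=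
  sInf ((fun l : List (Finset V) => ((l.length - 1 : ℕ) : ℕ∞)) ''
    {l | IsPIChain H l ∧ l.head? = some E ∧ l.getLast? = some F})

/-- A `d`-uniform properly-connected hypergraph. -/
def UniformPC (H : SimpleHypergraph V) (d : ℕ) : Prop :=
  (∀ e ∈ H.edges, e.card = d) ∧
  ∀ E ∈ H.edges, ∀ F ∈ H.edges, (E ∩ F).Nonempty →
    edgeDist H E F = ((d - (E ∩ F).card : ℕ) : ℕ∞)

/-- The sub-hypergraph consisting of the edges satisfying `P`. -/
def SimpleHypergraph.restrict (H : SimpleHypergraph V) (P : Finset V → Prop) :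
    SimpleHypergraph V where
  edges := H.edges.filter P
  card_ge := fun e he => H.card_ge e (Finset.mem_filter.mp he).1
  antichain := fun e he f hf hef =>
    H.antichain e (Finset.mem_filter.mp he).1 f (Finset.mem_filter.mp hf).1 hef

/-- The vertex neighbor set `N(E)` of an edge: union of `F \ E` over edges at distance 1. -/
def nbrSet (H : SimpleHypergraph V) (E : Finset V) : Finset V :=
  (H.edges.filter fun F => edgeDist H E F = 1).sup fun F => F \ E

variable (k : Type*) [Field k]

/-- The squarefree monomial attached to an edge. -/
def edgeMonomial (E : Finset V) : MvPolynomial V k := ∏ x ∈ E, MvPolynomial.X x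

/-- The edge ideal of a hypergraph. -/
def edgeIdeal (H : SimpleHypergraph V) : Ideal (MvPolynomial V k) :=
  Ideal.span ((fun E => edgeMonomial k E) '' ↑H.edges)

/-- The exponent vector of the squarefree monomial attached to an edge. -/
def mexp (E : Finset V) : V →₀ ℕ := ∑ x ∈ E, Finsupp.single x 1

/-- The minimal monomials (w.r.t. divisibility) among a finite set of monomials;
these are the minimal generators of the monomial ideal they generate. -/
def minMon (A : Finset (V →₀ ℕ)) : Finset (V →₀ ℕ) :=
  A.filter fun m => ∀ m' ∈ A, m' ≤ m → m' = m

/-- Minimal generators of `J ∩ K`, where `J`, `K` are the monomial ideals with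
(minimal) monomial generators `A`, `B`: minimal elements among the pairwise lcm's. -/
def interMin (A B : Finset (V →₀ ℕ)) : Finset (V →₀ ℕ) :=
  minMon ((A ×ˢ B).image fun p => p.1 ⊔ p.2)

/-- Eliahou–Kervaire splitting: the monomial ideal generated by `A ∪ B` is split as
the sum of the ideals generated by `A` and by `B`. -/
def IsSplitting (A B : Finset (V →₀ ℕ)) : Prop :=
  A.Nonempty ∧ B.Nonempty ∧ Disjoint A B ∧
  (∀ m ∈ A ∪ B, ∀ m' ∈ A ∪ B, m' ≤ m → m' = m) ∧
  ∃ φ ψ : (V →₀ ℕ) → (V →₀ ℕ),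
    (∀ w ∈ interMin A B, φ w ∈ A ∧ ψ w ∈ B ∧ w = φ w ⊔ ψ w) ∧
    ∀ S ⊆ interMin A B, S.Nonempty → S.sup φ < S.sup id ∧ S.sup ψ < S.sup id

/-- A splitting edge of a hypergraph: `I(H) = (x^E) + I(H \ E)` is a splitting. -/
def IsSplittingEdge (H : SimpleHypergraph V) (E : Finset V) : Prop :=
  E ∈ H.edges ∧ IsSplitting {mexp E} ((H.edges.erase E).image mexp)

variable [LinearOrder V]

/-- Total degree of a monomial. -/
def mdeg (m : V →₀ ℕ) : ℕ := m.sum fun _ e => e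

/-- Basis of the degree-`j` part of the `i`-th term of the Taylor complex of the monomial
ideal generated by `G`: `i`-element subsets of `G` whose lcm has degree `j`. -/
def TaylorIndex (G : Finset (V →₀ ℕ)) (i j : ℕ) : Finset (Finset (V →₀ ℕ)) :=
  G.powerset.filter fun S => S.card = i ∧ mdeg (S.sup id) = j

/-- Matrix of the Taylor-complex differential `T_{i+1} → T_i` reduced mod the maximal
ideal, in homological degree-`j` graded part. -/
def taylorMatrix (G : Finset (V →₀ ℕ)) (i j : ℕ) :
    Matrix (TaylorIndex G i j) (TaylorIndex G (i+1) j) k :=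
  fun S' S =>
    if (S' : Finset (V →₀ ℕ)) ⊆ (S : Finset (V →₀ ℕ)) ∧
        (S' : Finset (V →₀ ℕ)).sup id = (S : Finset (V →₀ ℕ)).sup id then
      ∑ m ∈ (S : Finset (V →₀ ℕ)) \ (S' : Finset (V →₀ ℕ)),
        (-1 : k) ^ ((S' : Finset (V →₀ ℕ)).filter fun a => toLex a < toLex m).card
    else 0

/-- The Taylor-complex differential reduced mod the maximal ideal. -/
def taylorBoundary (G : Finset (V →₀ ℕ)) (i j : ℕ) :
    ((TaylorIndex G (i+1) j) → k) →ₗ[k] ((TaylorIndex G i j) → k) :=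
  Matrix.mulVecLin (taylorMatrix k G i j)

/-- The graded Betti number `β_{i,j}` of the monomial ideal generated by `G`, computed as
the dimension of the degree-`j` part of the `i`-th homology of the Taylor complex tensored
with the residue field. -/
def monomialBetti (G : Finset (V →₀ ℕ)) (i j : ℕ) : ℕ :=
  Module.finrank k (LinearMap.ker (taylorBoundary k G i j)) -
  Module.finrank k (LinearMap.range (taylorBoundary k G (i+1) j))

/-- Castelnuovo–Mumford regularity of the monomial ideal generated by `G`. -/
def monReg (G : Finset (V →₀ ℕ)) : ℕ :=
  sSup {r | ∃ i j, monomialBetti k G i j ≠ 0 ∧ r + i = j}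

/-- Projective dimension of the monomial ideal generated by `G`. -/
def monPdim (G : Finset (V →₀ ℕ)) : ℕ :=
  sSup {i | ∃ j, monomialBetti k G i j ≠ 0}

/-- Graded Betti numbers of the edge ideal of a hypergraph. -/
def edgeBetti (H : SimpleHypergraph V) (i j : ℕ) : ℕ :=
  monomialBetti k (H.edges.image mexp) i j

/-- Regularity of the edge ideal of a hypergraph. -/
def edgeReg (H : SimpleHypergraph V) : ℕ :=
  monReg k (H.edges.image mexp)

/-!
The Betti numbers are read off the Taylor complex, so `β_{i,j} ≠ 0` requires `i + 1` edges whose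
union has `j` vertices; hence the regularity is at most `|⋃ M| - |M| + 1` maximised over sets `M`
of edges. For a set `M` of graph edges take a maximal matching `N ⊆ M`: every other edge of `M`
meets `⋃ N`, so it adds at most one vertex, and
`|⋃ M| ≤ 2 |N| + |M \ N| = |M| + |N| ≤ |M| + α'`.
-/

section Matching

variable {α : Type*} [DecidableEq α]

lemma exists_maximal_pairwiseDisjoint_subset (M : Finset (Finset α)) :
    ∃ N ⊆ M, (N : Set (Finset α)).PairwiseDisjoint id ∧ ∀ f ∈ M \ N, ∃ e ∈ N, ¬Disjoint f e := by
  let matchings :=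
    M.powerset.filter fun N : Finset (Finset α) => (N : Set (Finset α)).PairwiseDisjoint id
  obtain ⟨N, hN, hmax⟩ := Finset.exists_maximal (s := matchings) ⟨∅, by simp [matchings]⟩
  simp only [matchings, mem_filter, mem_powerset] at hN
  refine ⟨N, hN.1, hN.2, fun f hf => ?_⟩
  rw [mem_sdiff] at hf
  by_contra! hfN
  have hinsert : insert f N ∈ matchings := by
    simp only [matchings, mem_filter, mem_powerset, coe_insert]
    exact ⟨insert_subset hf.1 hN.1, hN.2.insert fun e he _ => hfN e he⟩
  exact hf.2 (hmax hinsert (subset_insert f N) (mem_insert_self f N))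

lemma sup_id_subset_union_biUnion_sdiff (M N : Finset (Finset α)) :
    M.sup id ⊆ N.sup id ∪ (M \ N).biUnion (· \ N.sup id) := by
  intro x hx
  obtain ⟨f, hfM, hxf⟩ := mem_sup.mp hx
  by_cases hfN : f ∈ N
  · exact mem_union_left _ (mem_sup.mpr ⟨f, hfN, hxf⟩)
  · by_cases hxN : x ∈ N.sup id
    · exact mem_union_left _ hxN
    · exact mem_union_right _
        (mem_biUnion.mpr ⟨f, mem_sdiff.mpr ⟨hfM, hfN⟩, mem_sdiff.mpr ⟨hxf, hxN⟩⟩)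

lemma exists_pairwiseDisjoint_subset_card_sup_le (M : Finset (Finset α))
    (hM : ∀ e ∈ M, e.card = 2) :
    ∃ N ⊆ M, (N : Set (Finset α)).PairwiseDisjoint id ∧ (M.sup id).card ≤ M.card + N.card := by
  obtain ⟨N, hNM, hN, hmax⟩ := exists_maximal_pairwiseDisjoint_subset M
  refine ⟨N, hNM, hN, ?_⟩
  have hmatched : (N.sup id).card ≤ N.card * 2 := by
    rw [sup_eq_biUnion]
    exact card_biUnion_le_card_mul N id 2 fun e he => (hM e (hNM he)).le
  have hnew : ((M \ N).biUnion (· \ N.sup id)).card ≤ (M \ N).card * 1 := by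
    refine card_biUnion_le_card_mul _ _ 1 fun f hf => ?_
    obtain ⟨e, heN, hfe⟩ := hmax f hf
    obtain ⟨x, hxf, hxe⟩ := not_disjoint_iff.mp hfe
    have hx : x ∈ f ∩ N.sup id := mem_inter.mpr ⟨hxf, mem_sup.mpr ⟨e, heN, hxe⟩⟩
    have hsplit := card_sdiff_add_card_inter f (N.sup id)
    have hmeets := card_pos.mpr ⟨x, hx⟩
    have hf2 := hM f (mem_sdiff.mp hf).1
    omega
  calc (M.sup id).card ≤ (N.sup id).card + ((M \ N).biUnion (· \ N.sup id)).card :=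
        (card_le_card (sup_id_subset_union_biUnion_sdiff M N)).trans (card_union_le _ _)
    _ ≤ M.card + N.card := by
        have hsplit := card_sdiff_add_card_eq_card hNM
        omega

end Matching

section Monomials

variable {σ : Type*} [DecidableEq σ]

lemma mexp_eq_toFinsupp (E : Finset σ) : mexp E = Multiset.toFinsupp E.val := by
  ext x
  simp [mexp, Finsupp.finsetSum_apply, Finsupp.single_apply, Multiset.count_eq_of_nodup E.nodup]

lemma mexp_injective : Function.Injective (mexp : Finset σ → σ →₀ ℕ) := fun E F h => by
  rw [mexp_eq_toFinsupp, mexp_eq_toFinsupp] at h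
  exact Finset.val_injective (Multiset.toFinsupp.injective h)

lemma mexp_union (E F : Finset σ) : mexp (E ∪ F) = mexp E ⊔ mexp F := by
  simp only [mexp_eq_toFinsupp, union_val, Multiset.toFinsupp_union]

lemma sup_mexp (M : Finset (Finset σ)) : M.sup mexp = mexp (M.sup id) := by
  induction M using Finset.induction_on with
  | empty => simp [mexp, bot_eq_zero]
  | insert E M _ ih => rw [sup_insert, sup_insert, ih, id, ← mexp_union]; rfl

lemma mdeg_mexp (E : Finset σ) : mdeg (mexp E) = E.card := by
  rw [mexp_eq_toFinsupp]
  exact Multiset.toFinsupp_sum_eq E.val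

lemma mdeg_sup_image_mexp (M : Finset (Finset σ)) :
    mdeg ((M.image mexp).sup id) = (M.sup id).card := by
  rw [sup_image, Function.id_comp, sup_mexp, mdeg_mexp]

end Monomials

section Taylor

variable {σ : Type*} [LinearOrder σ]

lemma nonempty_taylorIndex_of_monomialBetti_ne_zero {G : Finset (σ →₀ ℕ)} {i j : ℕ}
    (h : monomialBetti k G i j ≠ 0) : (TaylorIndex G (i + 1) j).Nonempty := by
  by_contra hempty
  have : IsEmpty (TaylorIndex G (i + 1) j) := by
    rw [not_nonempty_iff_eq_empty] at hempty
    exact isEmpty_coe_sort.mpr hempty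
  have : Module.finrank k (LinearMap.ker (taylorBoundary k G i j)) = 0 :=
    Module.finrank_zero_of_subsingleton
  exact h (by rw [monomialBetti, this, zero_tsub])

lemma monReg_le_of_forall_mdeg_sup_le (G : Finset (σ →₀ ℕ)) (c : ℕ)
    (h : ∀ S ⊆ G, mdeg (S.sup id) ≤ S.card + c) : monReg k G ≤ c + 1 := by
  refine csSup_le' ?_
  rintro r ⟨i, j, hβ, rfl⟩
  obtain ⟨S, hS⟩ := nonempty_taylorIndex_of_monomialBetti_ne_zero k hβ
  rw [TaylorIndex, mem_filter, mem_powerset] at hS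
  have hdeg := h S hS.1
  omega

end Taylor

theorem reg_le_matching_number (k : Type*) [Field k] {V : Type*} [LinearOrder V]
    (H : SimpleHypergraph V) (hgraph : ∀ e ∈ H.edges, e.card = 2) (a : ℕ)
    (hmatch : ∀ M ⊆ H.edges, (∀ E ∈ M, ∀ F ∈ M, E ≠ F → Disjoint E F) → M.card ≤ a) :
    edgeReg k H ≤ a + 1 := by
  refine monReg_le_of_forall_mdeg_sup_le k _ a fun S hS => ?_
  obtain ⟨M, hMH, rfl⟩ := subset_image_iff.mp hS
  obtain ⟨N, hNM, hN, hcard⟩ :=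
    exists_pairwiseDisjoint_subset_card_sup_le M fun e he => hgraph e (hMH he)
  have hNa : N.card ≤ a := hmatch N (hNM.trans hMH) fun E hE F hF hEF => hN hE hF hEF
  rw [mdeg_sup_image_mexp, card_image_of_injective M mexp_injective]
  omega
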